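/- Let t ≥ 1 and w be integers with w ≥ t² + 2t + 2, let X be a finite set, and let P be a family of subsets of X, each member of size w−1 or w, such that for every subset T ⊆ X with |T| = t there exists B ∈ P with B ∩ T = ∅. Let P^{w−1} denote the subfamily of members of P of size w−1, and let U(P^{w−1}) be the union of all members of P^{w−1}. If |U(P^{w−1})| ≥ w + t − 1, then τ(P) ≥ binom(w+t−1, 2). -/
import Mathlib


open Finset

/-- `tau P` is the number of 2-element sets contained in at least one member of `P`. -/
def tau {α : Type*} [DecidableEq α] (P : Finset (Finset α)) : ℕ :=
  (((P.sup id).powersetCard 2).filter (fun s => ∃ B ∈ P, s ⊆ B)).card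

lemma two_mul_choose_two (n : ℕ) : 2 * n.choose 2 + n = n * n := by
  induction n with
  | zero => rfl
  | succ m ih =>
    rw [Nat.choose_succ_succ, Nat.choose_one_right]
    nlinarith [ih]

lemma intB (T A B I S : ℤ) (ht : 1 ≤ T) (ha : T*T + 2*T + 1 ≤ A) (hb : A ≤ B)
    (hib : I + T + 1 ≤ B) (hInn : 0 ≤ I) (key : 2*S + I*I + B = B*B + I) :
    (A+T)*(A+T) - (A+T) ≤ A*A - A + 2*S := by
  set f := B - T - 1 - I with hf
  have hf0 : 0 ≤ f := by omega
  have h1 : 0 ≤ f * (f - 1) := by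
    rcases le_or_gt 1 f with h | h
    · exact mul_nonneg hf0 (by linarith)
    · have : f = 0 := by omega
      simp [this]
  have h2 : 0 ≤ f * I := mul_nonneg hf0 hInn
  have h3 : 0 ≤ T * (B - A) := mul_nonneg (by linarith) (by linarith)
  nlinarith [h1, h2, h3]

lemma intAi (T A I S R : ℤ) (ht : 1 ≤ T) (ha : T*T + 2*T + 1 ≤ A)
    (hit : I + T = A) (hr : A - 1 ≤ R)
    (key : 2*S + I*I + A = A*A + I) :
    (A+T)*(A+T) - (A+T) ≤ A*A - A + 2*S + 2*R := by
  have hI : I = A - T := by linarith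
  subst hI
  nlinarith []

lemma natB (t a b2 i s2 : ℕ) (ht : 1 ≤ t) (ha : t*t + 2*t + 1 ≤ a) (hb : a ≤ b2)
    (hib : i + t + 1 ≤ b2) (hs : s2 + i.choose 2 = b2.choose 2) :
    (a+t).choose 2 ≤ a.choose 2 + s2 := by
  have h1 := two_mul_choose_two (a+t)
  have h2 := two_mul_choose_two a
  have h3 := two_mul_choose_two i
  have h4 := two_mul_choose_two b2
  have key : 2*s2 + i*i + b2 = b2*b2 + i := by linarith
  have hZ := intB t a b2 i s2 (by exact_mod_cast ht) (by exact_mod_cast ha)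
    (by exact_mod_cast hb) (by exact_mod_cast hib) (Int.ofNat_nonneg i)
    (by exact_mod_cast key)
  have hfin : 2*((a+t).choose 2) ≤ 2*(a.choose 2) + 2*s2 := by
    zify at h1 h2 ⊢
    linarith [hZ]
  linarith

lemma natAi (t a i s2 s3 : ℕ) (ht : 1 ≤ t) (ha : t*t + 2*t + 1 ≤ a) (hit : i + t = a)
    (hs : s2 + i.choose 2 = a.choose 2) (hs3 : a ≤ s3 + 1) :
    (a+t).choose 2 ≤ a.choose 2 + s2 + s3 := by
  have h1 := two_mul_choose_two (a+t)
  have h2 := two_mul_choose_two a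
  have h3 := two_mul_choose_two i
  have key : 2*s2 + i*i + a = a*a + i := by linarith
  have hZ := intAi t a i s2 s3 (by exact_mod_cast ht) (by exact_mod_cast ha)
    (by exact_mod_cast hit) (by exact_mod_cast (show a - 1 ≤ (s3:ℤ) from by omega))
    (by exact_mod_cast key)
  have hfin : 2*((a+t).choose 2) ≤ 2*(a.choose 2) + 2*s2 + 2*s3 := by
    zify at h1 h2 ⊢
    linarith [hZ]
  linarith

theorem tau_lower_bound_large_union {α : Type*} [DecidableEq α] (t w : ℕ)
    (ht : 1 ≤ t) (hw : t ^ 2 + 2 * t + 2 ≤ w)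
    (X : Finset α) (P : Finset (Finset α))
    (hsub : ∀ B ∈ P, B ⊆ X)
    (hsize : ∀ B ∈ P, B.card = w - 1 ∨ B.card = w)
    (hA : ∀ T ⊆ X, T.card = t → ∃ B ∈ P, Disjoint B T)
    (hU : w + t - 1 ≤ ((P.filter (fun B => B.card = w - 1)).sup id).card) :
    (w + t - 1).choose 2 ≤ tau P := by
  classical
  have hw5 : 5 ≤ w := by nlinarith
  obtain ⟨a, rfl⟩ : ∃ a, w = a + 1 := ⟨w - 1, by omega⟩
  have ha : t*t + 2*t + 1 ≤ a := by nlinarith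
  have hta : t + 2 ≤ a := by nlinarith
  have hsize' : ∀ B ∈ P, B.card = a ∨ B.card = a + 1 := by
    intro B hB
    have := hsize B hB
    omega
  rw [show a + 1 + t - 1 = a + t from by omega]
  -- the covered set
  set C := (((P.sup id).powersetCard 2).filter (fun s => ∃ B ∈ P, s ⊆ B)) with hC
  have htau : tau P = C.card := rfl
  have memC : ∀ p : Finset α, p.card = 2 → ∀ B ∈ P, p ⊆ B → p ∈ C := by
    intro p hp B hB hpB
    rw [hC, mem_filter, mem_powersetCard]
    have hBsup : B ⊆ P.sup id := le_sup (f := id) hB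
    exact ⟨⟨hpB.trans hBsup, hp⟩, B, hB, hpB⟩
  -- find B1 of size a
  have hQ : ∃ B1 ∈ P, B1.card = a := by
    by_contra hcon
    push_neg at hcon
    have hemp : P.filter (fun B => B.card = a + 1 - 1) = ∅ := by
      rw [filter_eq_empty_iff]
      intro B hB
      simpa using hcon B hB
    rw [hemp] at hU
    simp at hU
    omega
  obtain ⟨B1, hB1P, hB1card⟩ := hQ
  -- T2 and B2
  obtain ⟨T2, hT2B1, hT2card⟩ := exists_subset_card_eq
    (show t ≤ B1.card by rw [hB1card]; omega)
  obtain ⟨B2, hB2P, hB2disj⟩ := hA T2 (hT2B1.trans (hsub B1 hB1P)) hT2card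
  have hi : (B1 ∩ B2).card + t ≤ a := by
    have hsub2 : B1 ∩ B2 ⊆ B1 \ T2 := by
      intro x hx
      rw [mem_inter] at hx
      rw [mem_sdiff]
      exact ⟨hx.1, fun hxT => (disjoint_left.mp hB2disj) hx.2 hxT⟩
    have hle := card_le_card hsub2
    rw [card_sdiff_of_subset hT2B1, hB1card, hT2card] at hle
    omega
  have hb2 : B2.card = a ∨ B2.card = a + 1 := hsize' B2 hB2P
  -- S1 and S2
  set S1 := B1.powersetCard 2 with hS1def
  set S2 := (B2.powersetCard 2).filter (fun p => ¬ p ⊆ B1) with hS2def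
  have hS2eq : S2.card + ((B1 ∩ B2).card).choose 2 = B2.card.choose 2 := by
    have hfilter : (B2.powersetCard 2).filter (fun p => p ⊆ B1) =
        (B1 ∩ B2).powersetCard 2 := by
      ext p
      simp only [mem_filter, mem_powersetCard, subset_inter_iff]
      tauto
    have hfc := card_filter_add_card_filter_not
      (s := B2.powersetCard 2) (p := fun p => p ⊆ B1)
    rw [hfilter, card_powersetCard, card_powersetCard] at hfc
    rw [hS2def]
    omega
  have hS1C : S1 ⊆ C := by
    intro p hp
    rw [hS1def, mem_powersetCard] at hp
    exact memC p hp.2 B1 hB1P hp.1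
  have hS2C : S2 ⊆ C := by
    intro p hp
    rw [hS2def, mem_filter, mem_powersetCard] at hp
    exact memC p hp.1.2 B2 hB2P hp.1.1
  have hdisj12 : Disjoint S1 S2 := by
    rw [disjoint_left]
    intro p hp hp2
    rw [hS1def, mem_powersetCard] at hp
    rw [hS2def, mem_filter] at hp2
    exact hp2.2 hp.1
  have hcard12 : (S1 ∪ S2).card = a.choose 2 + S2.card := by
    rw [card_union_of_disjoint hdisj12, hS1def, card_powersetCard, hB1card]
  by_cases hsplit : (B1 ∩ B2).card + t + 1 ≤ B2.card
  · -- enough pairs already from B1 and B2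
    rw [htau]
    refine le_trans ?_ (card_le_card (union_subset hS1C hS2C))
    rw [hcard12]
    exact natB t a B2.card (B1 ∩ B2).card S2.card ht ha (by omega) hsplit hS2eq
  · -- B2.card = a and (B1 ∩ B2).card = a - t
    have hb2a : B2.card = a := by omega
    have hita : (B1 ∩ B2).card + t = a := by omega
    rw [hb2a] at hS2eq
    have hVcard : (B1 ∪ B2).card = a + t := by
      have h' := card_union_add_card_inter B1 B2
      rw [hB1card, hb2a] at h'
      omega
    by_cases hBall : ∀ B ∈ P, B ⊆ B1 ∪ B2
    · -- every pair of V is covered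
      have hPV : (B1 ∪ B2).powersetCard 2 ⊆ C := by
        intro p hp
        rw [mem_powersetCard] at hp
        obtain ⟨hpV, hp2⟩ := hp
        have hTex : t ≤ ((B1 ∪ B2) \ p).card := by
          rw [card_sdiff_of_subset hpV, hVcard, hp2]
          omega
        obtain ⟨T, hTsub, hTcard⟩ := exists_subset_card_eq hTex
        have hTV : T ⊆ B1 ∪ B2 := hTsub.trans sdiff_subset
        have hTX : T ⊆ X := hTV.trans (union_subset (hsub B1 hB1P) (hsub B2 hB2P))
        obtain ⟨B, hBP, hBdisj⟩ := hA T hTX hTcard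
        have hBVT : B ⊆ (B1 ∪ B2) \ T := by
          intro x hx
          rw [mem_sdiff]
          exact ⟨hBall B hBP hx, fun hxT => disjoint_left.mp hBdisj hx hxT⟩
        have hVTcard : ((B1 ∪ B2) \ T).card = a := by
          rw [card_sdiff_of_subset hTV, hVcard, hTcard]
          omega
        have hBeq : B = (B1 ∪ B2) \ T := by
          refine eq_of_subset_of_card_le hBVT ?_
          rw [hVTcard]
          rcases hsize' B hBP with h | h <;> omega
        refine memC p hp2 B hBP ?_
        rw [hBeq]
        intro x hxp
        rw [mem_sdiff]
        refine ⟨hpV hxp, fun hxT => ?_⟩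
        exact (mem_sdiff.mp (hTsub hxT)).2 hxp
      rw [htau]
      calc (a+t).choose 2 = ((B1 ∪ B2).powersetCard 2).card := by
            rw [card_powersetCard, hVcard]
        _ ≤ C.card := card_le_card hPV
    · -- some block B3 sticks out of V
      push_neg at hBall
      obtain ⟨B3, hB3P, hB3nsub⟩ := hBall
      obtain ⟨x0, hx0B3, hx0V⟩ := not_subset.mp hB3nsub
      have hx0nB1 : x0 ∉ B1 := fun h => hx0V (mem_union_left _ h)
      have hx0nB2 : x0 ∉ B2 := fun h => hx0V (mem_union_right _ h)
      set S3 := (B3.erase x0).image (fun y => insert x0 ({y} : Finset α)) with hS3def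
      have hS3card : S3.card + 1 = B3.card := by
        rw [hS3def, card_image_of_injOn, card_erase_of_mem hx0B3]
        · have : 1 ≤ B3.card := card_pos.mpr ⟨x0, hx0B3⟩
          omega
        · intro y hy z hz hyz
          simp only at hyz
          have hy' : y ∈ insert x0 ({z} : Finset α) := by
            rw [← hyz]
            simp
          rw [mem_insert, mem_singleton] at hy'
          rcases hy' with h | h
          · exact absurd h (ne_of_mem_erase hy)
          · exact h
      have hS3C : S3 ⊆ C := by
        intro p hp
        rw [hS3def, mem_image] at hp
        obtain ⟨y, hy, rfl⟩ := hp
        have hyB3 : y ∈ B3 := mem_of_mem_erase hy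
        have hyx0 : y ≠ x0 := ne_of_mem_erase hy
        refine memC _ ?_ B3 hB3P ?_
        · rw [card_insert_of_notMem (by simp [hyx0.symm]), card_singleton]
        · intro z hz
          rw [mem_insert, mem_singleton] at hz
          rcases hz with rfl | rfl
          · exact hx0B3
          · exact hyB3
      have hdisj3 : Disjoint (S1 ∪ S2) S3 := by
        rw [disjoint_right]
        intro p hp hpU
        rw [hS3def, mem_image] at hp
        obtain ⟨y, hy, rfl⟩ := hp
        have hx0p : x0 ∈ insert x0 ({y} : Finset α) := mem_insert_self _ _
        rcases mem_union.mp hpU with h | h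
        · rw [hS1def, mem_powersetCard] at h
          exact hx0nB1 (h.1 hx0p)
        · rw [hS2def, mem_filter, mem_powersetCard] at h
          exact hx0nB2 (h.1.1 hx0p)
      rw [htau]
      refine le_trans ?_ (card_le_card (union_subset (union_subset hS1C hS2C) hS3C))
      rw [card_union_of_disjoint hdisj3, hcard12]
      refine natAi t a (B1 ∩ B2).card S2.card S3.card ht ha hita hS2eq ?_
      have hB3big : a ≤ B3.card := by rcases hsize' B3 hB3P with h | h <;> omega
      omega
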